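/- arXiv:1407.3005 — 4 statements merged into one kernel-verified Lean document; each statement's English description precedes it below -/
import Mathlib

section
/- Let (Λ, ν) be a measure space, let n ≥ 2, and let μ_0, μ_1, …, μ_n : Λ → ℝ be measurable functions with μ_j ≥ 0 pointwise and ∫ μ_j dν = 1 for every j. For each pair 1 ≤ j1 < j2 ≤ n, let ξ^{(j1,j2)}_0, ξ^{(j1,j2)}_1, ξ^{(j1,j2)}_2 : Λ → ℝ be measurable functions with ξ^{(j1,j2)}_i ≥ 0 pointwise and ξ^{(j1,j2)}_0(λ) + ξ^{(j1,j2)}_1(λ) + ξ^{(j1,j2)}_2(λ) = 1 for all λ ∈ Λ. Then ∑_{j=1}^{n} ∫ min(μ_0, μ_j) dν ≤ 1 + ∑_{1 ≤ j1 < j2 ≤ n} ( ∫ ξ^{(j1,j2)}_0 μ_0 dν + ∫ ξ^{(j1,j2)}_1 μ_{j1} dν + ∫ ξ^{(j1,j2)}_2 μ_{j2} dν ). -/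
/-! Pointwise, put `c j = min (μ 0) (μ j) ≤ μ 0`. If `c m` is the largest of them, every other
`c j` equals `min (c j) (c m)`, one of the pairwise minima, so `∑ c j ≤ μ 0 + ∑ min (c j1) (c j2)`.
Each pairwise minimum is `min (μ 0) (μ j1) (μ j2)`, which is below the convex combination
`ξ 0 * μ 0 + ξ 1 * μ j1 + ξ 2 * μ j2`. Integrating, with `∫ μ 0 = 1`, gives the bound. -/

open MeasureTheory Finset

section
variable {ι : Type*} [LinearOrder ι] [LocallyFiniteOrder ι]

theorem sum_Icc_le_add_sum_Ioc_min {k n m : ι} {c : ι → ℝ} (hm : m ∈ Icc k n)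
    (hmax : ∀ j ∈ Icc k n, c j ≤ c m) (hc : ∀ j ∈ Icc k n, 0 ≤ c j) :
    ∑ j ∈ Icc k n, c j ≤ c m + ∑ j1 ∈ Icc k n, ∑ j2 ∈ Ioc j1 n, min (c j1) (c j2) := by
  obtain ⟨hkm, hmn⟩ := mem_Icc.1 hm
  set pairs : ι → ℝ := fun j1 ↦ ∑ j2 ∈ Ioc j1 n, min (c j1) (c j2)
  have hpairs_nonneg : ∀ j1 ∈ Icc k n, 0 ≤ pairs j1 := fun j1 hj1 ↦
    sum_nonneg fun j2 hj2 ↦ le_min (hc j1 hj1) (hc j2 (by grind))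
  have hsplit : ∑ j ∈ Icc k n, c j = ∑ j ∈ Ico k m, c j + c m + ∑ j ∈ Ioc m n, c j := by
    rw [← sum_filter_add_sum_filter_not (Icc k n) (· ≤ m),
      show {j ∈ Icc k n | j ≤ m} = Icc k m by grind,
      show {j ∈ Icc k n | ¬ j ≤ m} = Ioc m n by grind, sum_Ico_add_eq_sum_Icc hkm]
  have hbelow : ∑ j ∈ Ico k m, c j ≤ ∑ j1 ∈ Ico k m, pairs j1 :=
    sum_le_sum fun j1 hj1 ↦ calc
      c j1 = min (c j1) (c m) := (min_eq_left (hmax j1 (by grind))).symm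
      _ ≤ pairs j1 := single_le_sum (f := fun j2 ↦ min (c j1) (c j2))
          (fun j2 hj2 ↦ le_min (hc j1 (by grind)) (hc j2 (by grind))) (by grind)
  have habove : ∑ j ∈ Ioc m n, c j = pairs m :=
    sum_congr rfl fun j hj ↦ (min_eq_right (hmax j (by grind))).symm
  have hpairs : ∑ j1 ∈ Ico k m, pairs j1 + pairs m ≤ ∑ j1 ∈ Icc k n, pairs j1 := by
    rw [sum_Ico_add_eq_sum_Icc hkm]
    exact sum_le_sum_of_subset_of_nonneg (Icc_subset_Icc_right hmn)
      fun j1 hj1 _ ↦ hpairs_nonneg j1 hj1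
  linarith

theorem sum_Icc_le_add_sum_Ioc_min_of_le {k n : ι} {a : ℝ} {c : ι → ℝ} (ha : 0 ≤ a)
    (hc : ∀ j ∈ Icc k n, 0 ≤ c j) (hca : ∀ j ∈ Icc k n, c j ≤ a) :
    ∑ j ∈ Icc k n, c j ≤ a + ∑ j1 ∈ Icc k n, ∑ j2 ∈ Ioc j1 n, min (c j1) (c j2) := by
  rcases (Icc k n).eq_empty_or_nonempty with hempty | hne
  · simpa [hempty] using ha
  obtain ⟨m, hm, hmax⟩ := exists_max_image (Icc k n) c hne
  linarith [sum_Icc_le_add_sum_Ioc_min hm hmax hc, hca m hm]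

end

theorem le_mul_add_mul_add_mul {m x₀ x₁ x₂ w₀ w₁ w₂ : ℝ} (hw₀ : 0 ≤ w₀) (hw₁ : 0 ≤ w₁)
    (hw₂ : 0 ≤ w₂) (hw : w₀ + w₁ + w₂ = 1) (hx₀ : m ≤ x₀) (hx₁ : m ≤ x₁) (hx₂ : m ≤ x₂) :
    m ≤ w₀ * x₀ + w₁ * x₁ + w₂ * x₂ := by
  linear_combination w₀ * hx₀ + w₁ * hx₁ + w₂ * hx₂ - m * hw

theorem le_one_of_sum_fin_three_eq_one {w : Fin 3 → ℝ} (hw : ∀ i, 0 ≤ w i)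
    (hsum : w 0 + w 1 + w 2 = 1) (i : Fin 3) : w i ≤ 1 :=
  (single_le_sum (fun j _ ↦ hw j) (mem_univ i)).trans_eq (by rw [Fin.sum_univ_three, hsum])

theorem sum_Icc_min_le_add_sum_pairs (n : ℕ) (x : ℕ → ℝ) (hx : ∀ j, j ≤ n → 0 ≤ x j)
    (w : ℕ → ℕ → Fin 3 → ℝ)
    (hw_nonneg : ∀ j1 j2, 1 ≤ j1 → j1 < j2 → j2 ≤ n → ∀ i, 0 ≤ w j1 j2 i)
    (hw_sum : ∀ j1 j2, 1 ≤ j1 → j1 < j2 → j2 ≤ n → w j1 j2 0 + w j1 j2 1 + w j1 j2 2 = 1) :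
    ∑ j ∈ Icc 1 n, min (x 0) (x j) ≤
      x 0 + ∑ j1 ∈ Icc 1 n, ∑ j2 ∈ Ioc j1 n,
        (w j1 j2 0 * x 0 + w j1 j2 1 * x j1 + w j1 j2 2 * x j2) := by
  have hx₀ := hx 0 n.zero_le
  calc ∑ j ∈ Icc 1 n, min (x 0) (x j)
      ≤ x 0 + ∑ j1 ∈ Icc 1 n, ∑ j2 ∈ Ioc j1 n, min (min (x 0) (x j1)) (min (x 0) (x j2)) :=
        sum_Icc_le_add_sum_Ioc_min_of_le hx₀
          (fun j hj ↦ le_min hx₀ (hx j (mem_Icc.1 hj).2)) fun _ _ ↦ min_le_left _ _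
    _ ≤ _ := by
        gcongr with j1 hj1 j2 hj2
        obtain ⟨h1, h12, h2⟩ : 1 ≤ j1 ∧ j1 < j2 ∧ j2 ≤ n := by grind
        have hw := hw_nonneg j1 j2 h1 h12 h2
        exact le_mul_add_mul_add_mul (hw 0) (hw 1) (hw 2) (hw_sum j1 j2 h1 h12 h2)
          ((min_le_left _ _).trans (min_le_left _ _))
          ((min_le_left _ _).trans (min_le_right _ _))
          ((min_le_right _ _).trans (min_le_right _ _))

section
variable {Λ : Type*} [MeasurableSpace Λ] {ν : Measure Λ} {ξ : Fin 3 → Λ → ℝ}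

theorem Integrable.response_mul {f : Λ → ℝ} (hf : Integrable f ν)
    (hξ_meas : ∀ i, Measurable (ξ i)) (hξ_nonneg : ∀ i l, 0 ≤ ξ i l)
    (hξ_sum : ∀ l, ξ 0 l + ξ 1 l + ξ 2 l = 1) (i : Fin 3) :
    Integrable (fun l ↦ ξ i l * f l) ν :=
  hf.bdd_mul (c := 1) (hξ_meas i).aestronglyMeasurable <| ae_of_all _ fun l ↦ by
    rw [Real.norm_of_nonneg (hξ_nonneg i l)]
    exact le_one_of_sum_fin_three_eq_one (hξ_nonneg · l) (hξ_sum l) i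

theorem integrable_and_integral_response_sum (hξ_meas : ∀ i, Measurable (ξ i))
    (hξ_nonneg : ∀ i l, 0 ≤ ξ i l) (hξ_sum : ∀ l, ξ 0 l + ξ 1 l + ξ 2 l = 1)
    {f₀ f₁ f₂ : Λ → ℝ} (hf₀ : Integrable f₀ ν) (hf₁ : Integrable f₁ ν) (hf₂ : Integrable f₂ ν) :
    Integrable (fun l ↦ ξ 0 l * f₀ l + ξ 1 l * f₁ l + ξ 2 l * f₂ l) ν ∧
      ∫ l, (ξ 0 l * f₀ l + ξ 1 l * f₁ l + ξ 2 l * f₂ l) ∂ν =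
        (∫ l, ξ 0 l * f₀ l ∂ν) + (∫ l, ξ 1 l * f₁ l ∂ν) + (∫ l, ξ 2 l * f₂ l ∂ν) := by
  have h₀ := Integrable.response_mul hf₀ hξ_meas hξ_nonneg hξ_sum 0
  have h₁ := Integrable.response_mul hf₁ hξ_meas hξ_nonneg hξ_sum 1
  have h₂ := Integrable.response_mul hf₂ hξ_meas hξ_nonneg hξ_sum 2
  refine ⟨(h₀.add h₁).add h₂, ?_⟩
  rw [integral_add _ h₂, integral_add h₀ h₁]
  exact h₀.add h₁

end

theorem lemma1_general {Λ : Type*} [MeasurableSpace Λ] (ν : Measure Λ) (n : ℕ)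
    (μ : ℕ → Λ → ℝ)
    (hμ_nonneg : ∀ j, j ≤ n → ∀ l, 0 ≤ μ j l)
    (hμ_norm : ∀ j, j ≤ n → ∫ l, μ j l ∂ν = 1)
    (ξ : ℕ → ℕ → Fin 3 → Λ → ℝ)
    (hξ_meas : ∀ j1 j2, 1 ≤ j1 → j1 < j2 → j2 ≤ n → ∀ i, Measurable (ξ j1 j2 i))
    (hξ_nonneg : ∀ j1 j2, 1 ≤ j1 → j1 < j2 → j2 ≤ n → ∀ i l, 0 ≤ ξ j1 j2 i l)
    (hξ_sum : ∀ j1 j2, 1 ≤ j1 → j1 < j2 → j2 ≤ n →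
      ∀ l, ξ j1 j2 0 l + ξ j1 j2 1 l + ξ j1 j2 2 l = 1) :
    ∑ j ∈ Finset.Icc 1 n, ∫ l, min (μ 0 l) (μ j l) ∂ν ≤
      1 + ∑ j1 ∈ Finset.Icc 1 n, ∑ j2 ∈ Finset.Ioc j1 n,
        ((∫ l, ξ j1 j2 0 l * μ 0 l ∂ν) + (∫ l, ξ j1 j2 1 l * μ j1 l ∂ν) +
          (∫ l, ξ j1 j2 2 l * μ j2 l ∂ν)) := by
  have hμ_int : ∀ j, j ≤ n → Integrable (μ j) ν := fun j hj ↦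
    Integrable.of_integral_ne_zero (by rw [hμ_norm j hj]; exact one_ne_zero)
  have hpair : ∀ j1 ∈ Icc 1 n, ∀ j2 ∈ Ioc j1 n,
      Integrable (fun l ↦ ξ j1 j2 0 l * μ 0 l + ξ j1 j2 1 l * μ j1 l + ξ j1 j2 2 l * μ j2 l) ν ∧
      ∫ l, (ξ j1 j2 0 l * μ 0 l + ξ j1 j2 1 l * μ j1 l + ξ j1 j2 2 l * μ j2 l) ∂ν =
        (∫ l, ξ j1 j2 0 l * μ 0 l ∂ν) + (∫ l, ξ j1 j2 1 l * μ j1 l ∂ν) +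
          (∫ l, ξ j1 j2 2 l * μ j2 l ∂ν) := by
    intro j1 hj1 j2 hj2
    obtain ⟨h1, h12, h2⟩ : 1 ≤ j1 ∧ j1 < j2 ∧ j2 ≤ n := by grind
    exact integrable_and_integral_response_sum (hξ_meas j1 j2 h1 h12 h2)
      (hξ_nonneg j1 j2 h1 h12 h2) (hξ_sum j1 j2 h1 h12 h2) (hμ_int 0 n.zero_le)
      (hμ_int j1 (by omega)) (hμ_int j2 h2)
  have hpairs_int := integrable_finsetSum (Icc 1 n) fun j1 hj1 ↦
    integrable_finsetSum (Ioc j1 n) fun j2 hj2 ↦ (hpair j1 hj1 j2 hj2).1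
  have hmin_int : ∀ j ∈ Icc 1 n, Integrable (fun l ↦ min (μ 0 l) (μ j l)) ν := fun j hj ↦
    (hμ_int 0 n.zero_le).inf (hμ_int j (mem_Icc.1 hj).2)
  calc ∑ j ∈ Icc 1 n, ∫ l, min (μ 0 l) (μ j l) ∂ν
      = ∫ l, ∑ j ∈ Icc 1 n, min (μ 0 l) (μ j l) ∂ν := (integral_finsetSum _ hmin_int).symm
    _ ≤ ∫ l, (μ 0 l + ∑ j1 ∈ Icc 1 n, ∑ j2 ∈ Ioc j1 n,
          (ξ j1 j2 0 l * μ 0 l + ξ j1 j2 1 l * μ j1 l + ξ j1 j2 2 l * μ j2 l)) ∂ν :=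
        integral_mono (integrable_finsetSum _ hmin_int) ((hμ_int 0 n.zero_le).add hpairs_int)
          fun l ↦ sum_Icc_min_le_add_sum_pairs n (μ · l) (hμ_nonneg · · l) (ξ · · · l)
            (fun j1 j2 h1 h12 h2 i ↦ hξ_nonneg j1 j2 h1 h12 h2 i l)
            (fun j1 j2 h1 h12 h2 ↦ hξ_sum j1 j2 h1 h12 h2 l)
    _ = _ := by
        rw [integral_add (hμ_int 0 n.zero_le) hpairs_int, hμ_norm 0 n.zero_le,
          integral_finsetSum _ fun j1 hj1 ↦ integrable_finsetSum _ fun j2 hj2 ↦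
            (hpair j1 hj1 j2 hj2).1]
        refine congrArg _ (sum_congr rfl fun j1 hj1 ↦ ?_)
        rw [integral_finsetSum _ fun j2 hj2 ↦ (hpair j1 hj1 j2 hj2).1]
        exact sum_congr rfl fun j2 hj2 ↦ (hpair j1 hj1 j2 hj2).2

/-- **Lemma 1**: for epistemic states `μ_0, …, μ_n` and, for each pair `1 ≤ j1 < j2 ≤ n`,
a 3-outcome measurement with response functions `ξ j1 j2 0, ξ j1 j2 1, ξ j1 j2 2`,
the sum of the classical overlaps of `μ_0` with each `μ_j` is bounded by
`1` plus the sum over pairs of the probabilities of outcome `m_i` on `μ_{j_i}` (with `j_0 = 0`). -/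
theorem lemma1 {Λ : Type*} [MeasurableSpace Λ] (ν : Measure Λ) (n : ℕ) (hn : 2 ≤ n)
    (μ : ℕ → Λ → ℝ)
    (hμ_meas : ∀ j, j ≤ n → Measurable (μ j))
    (hμ_nonneg : ∀ j, j ≤ n → ∀ l, 0 ≤ μ j l)
    (hμ_norm : ∀ j, j ≤ n → ∫ l, μ j l ∂ν = 1)
    (ξ : ℕ → ℕ → Fin 3 → Λ → ℝ)
    (hξ_meas : ∀ j1 j2, 1 ≤ j1 → j1 < j2 → j2 ≤ n → ∀ i, Measurable (ξ j1 j2 i))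
    (hξ_nonneg : ∀ j1 j2, 1 ≤ j1 → j1 < j2 → j2 ≤ n → ∀ i l, 0 ≤ ξ j1 j2 i l)
    (hξ_sum : ∀ j1 j2, 1 ≤ j1 → j1 < j2 → j2 ≤ n →
      ∀ l, ξ j1 j2 0 l + ξ j1 j2 1 l + ξ j1 j2 2 l = 1) :
    ∑ j ∈ Finset.Icc 1 n, ∫ l, min (μ 0 l) (μ j l) ∂ν ≤
      1 + ∑ j1 ∈ Finset.Icc 1 n, ∑ j2 ∈ Finset.Ioc j1 n,
        ((∫ l, ξ j1 j2 0 l * μ 0 l ∂ν) + (∫ l, ξ j1 j2 1 l * μ j1 l ∂ν) +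
          (∫ l, ξ j1 j2 2 l * μ j2 l ∂ν)) :=
  lemma1_general ν n μ hμ_nonneg hμ_norm ξ hξ_meas hξ_nonneg hξ_sum
end

section
/- Let n ≥ 2 and let ψ_0, ψ_1, …, ψ_n be unit vectors in ℂ^d such that every triple (ψ_0, ψ_{j1}, ψ_{j2}) with 1 ≤ j1 < j2 ≤ n is PP-incompatible, and such that all quantum overlaps with ψ_0 are equal and nonzero: |⟨ψ_0, ψ_j⟩| = |⟨ψ_0, ψ_1⟩| ≠ 0 for all 1 ≤ j ≤ n. Then every ontological model for projective measurements on ℂ^d that reproduces quantum measurement statistics satisfies (1/n) ∑_{j=1}^{n} κ(ψ_0, ψ_j) ≤ 1 / (n · ω_Q(ψ_0, ψ_1)). -/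
noncomputable section

/-- An ontological model for projective measurements on `ℂ^d`: a σ-finite measure space
of ontic states, an epistemic state (normalized probability density) for each unit vector,
and response functions for each orthonormal (projection) basis. -/
structure OntModel (d : ℕ) where
  /-- the ontic state space -/
  Lam : Type
  [ms : MeasurableSpace Lam]
  /-- the measure on the ontic state space -/
  ν : MeasureTheory.Measure Lam
  sf : MeasureTheory.SigmaFinite ν
  /-- the epistemic states -/
  μ : EuclideanSpace ℂ (Fin d) → Lam → ℝ
  μ_meas : ∀ ψ, Measurable (μ ψ)
  μ_nonneg : ∀ ψ l, 0 ≤ μ ψ l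
  μ_norm : ∀ ψ : EuclideanSpace ℂ (Fin d), ‖ψ‖ = 1 → ∫ l, μ ψ l ∂ν = 1
  /-- the response functions -/
  ξ : (Fin d → EuclideanSpace ℂ (Fin d)) → Fin d → Lam → ℝ
  ξ_meas : ∀ M i, Measurable (ξ M i)
  ξ_nonneg : ∀ M i l, 0 ≤ ξ M i l
  ξ_sum : ∀ M, Orthonormal ℂ M → ∀ l, ∑ i, ξ M i l = 1

/-- The model reproduces quantum measurement statistics: for every unit vector `ψ` and
every orthonormal basis `M`, the probability of outcome `i` is `|⟨m_i, ψ⟩|²`. -/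
def Reproduces {d : ℕ} (m : OntModel d) : Prop :=
  ∀ ψ : EuclideanSpace ℂ (Fin d), ‖ψ‖ = 1 →
    ∀ M : Fin d → EuclideanSpace ℂ (Fin d), Orthonormal ℂ M →
      ∀ i : Fin d, ∫ l, m.ξ M i l * m.μ ψ l ∂m.ν = ‖(inner ℂ (M i) ψ : ℂ)‖ ^ 2

/-- The classical overlap `ω_C(ψ, φ) = ∫ min(μ_ψ, μ_φ) dν`. -/
def omegaC {d : ℕ} (m : OntModel d) (ψ φ : EuclideanSpace ℂ (Fin d)) : ℝ :=
  ∫ l, min (m.μ ψ l) (m.μ φ l) ∂m.ν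

/-- The quantum overlap `ω_Q(ψ, φ) = 1 − √(1 − |⟨ψ, φ⟩|²)`. -/
def omegaQ {d : ℕ} (ψ φ : EuclideanSpace ℂ (Fin d)) : ℝ :=
  1 - Real.sqrt (1 - ‖(inner ℂ ψ φ : ℂ)‖ ^ 2)

/-- The ratio of classical-to-quantum overlaps `κ(ψ, φ) = ω_C(ψ, φ)/ω_Q(ψ, φ)`. -/
def kappa {d : ℕ} (m : OntModel d) (ψ φ : EuclideanSpace ℂ (Fin d)) : ℝ :=
  omegaC m ψ φ / omegaQ ψ φ

/-- An orthogonal projection: idempotent and symmetric. -/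
def IsOrthogonalProjection {d : ℕ}
    (P : EuclideanSpace ℂ (Fin d) →ₗ[ℂ] EuclideanSpace ℂ (Fin d)) : Prop :=
  P ∘ₗ P = P ∧ LinearMap.IsSymmetric P

/-- `(ψ0, ψ1, ψ2)` are PP-incompatible: there are orthogonal projections summing to the
identity with `P_i ψ_i = 0` for each `i`. -/
def PPIncompatible {d : ℕ} (ψ0 ψ1 ψ2 : EuclideanSpace ℂ (Fin d)) : Prop :=
  ∃ P0 P1 P2 : EuclideanSpace ℂ (Fin d) →ₗ[ℂ] EuclideanSpace ℂ (Fin d),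
    IsOrthogonalProjection P0 ∧ IsOrthogonalProjection P1 ∧ IsOrthogonalProjection P2 ∧
    P0 + P1 + P2 = LinearMap.id ∧ P0 ψ0 = 0 ∧ P1 ψ1 = 0 ∧ P2 ψ2 = 0

/-!
Reproducing the Born rule forces the response `ξ_M(a|·)` to an orthonormal basis vector `m_a`
orthogonal to `ψ` to vanish almost everywhere on the support of `μ_ψ`. The projections
witnessing PP-incompatibility of `(ψ₀, ψ₁, ψ₂)` have mutually orthogonal ranges, so some
orthonormal basis has each of its vectors orthogonal to one of the three states; since the
responses sum to one, almost no ontic state lies in all three supports. Hence almost everywhere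
`μ_{ψ₀}` overlaps at most one `μ_{ψⱼ}`, so `∑ⱼ min(μ_{ψ₀}, μ_{ψⱼ}) ≤ μ_{ψ₀}`. Integrating gives
`∑ⱼ ω_C(ψ₀, ψⱼ) ≤ 1`, and all the `ω_Q(ψ₀, ψⱼ)` equal `ω_Q(ψ₀, ψ₁)`.
-/

open MeasureTheory Filter
open scoped InnerProductSpace

theorem Finset.sum_min_le_of_forall_ne {ι α : Type*} [AddCommMonoid α] [LinearOrder α]
    [IsOrderedAddMonoid α] {s : Finset ι} {a : α} {b : ι → α} (ha : 0 ≤ a)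
    (hb : ∀ j ∈ s, 0 ≤ b j) (h : ∀ j ∈ s, ∀ k ∈ s, j ≠ k → a = 0 ∨ b j = 0 ∨ b k = 0) :
    ∑ j ∈ s, min a (b j) ≤ a := by
  by_cases hzero : ∑ j ∈ s, min a (b j) = 0
  · exact hzero.trans_le ha
  obtain ⟨j, hj, hmin⟩ := Finset.exists_ne_zero_of_sum_ne_zero hzero
  have ha0 : a ≠ 0 := fun h0 => hmin (by rw [h0, min_eq_left (hb j hj)])
  have hbj : b j ≠ 0 := fun h0 => hmin (by rw [h0, min_eq_right ha])
  rw [Finset.sum_eq_single_of_mem j hj fun k hk hkj => by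
    rw [((h j hj k hk hkj.symm).resolve_left ha0).resolve_left hbj, min_eq_right ha]]
  exact min_le_left a (b j)

section OrthogonalProjections

variable {𝕜 E ι : Type*} [RCLike 𝕜] [NormedAddCommGroup E] [InnerProductSpace 𝕜 E] [Fintype ι]
  {P : ι → E →ₗ[𝕜] E}

theorem LinearMap.apply_apply_eq_zero_of_sum_eq_id (hidem : ∀ k, P k ∘ₗ P k = P k)
    (hsym : ∀ k, (P k).IsSymmetric) (hsum : ∑ k, P k = LinearMap.id) {i j : ι} (hij : i ≠ j)
    (x : E) : P j (P i x) = 0 := by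
  classical
  set u := P i x
  have hu : P i u = u := LinearMap.congr_fun (hidem i) x
  have hnorm : ∀ k, ‖P k u‖ ^ 2 = RCLike.re ⟪P k u, u⟫_𝕜 := fun k => by
    rw [← inner_self_eq_norm_sq (𝕜 := 𝕜), ← hsym k, ← LinearMap.comp_apply, hidem k]
  have htotal : ∑ k, ‖P k u‖ ^ 2 = ‖u‖ ^ 2 := by
    simp_rw [hnorm, ← map_sum, ← sum_inner, ← LinearMap.sum_apply, hsum, LinearMap.id_apply,
      inner_self_eq_norm_sq]
  have hrest : ∑ k ∈ Finset.univ.erase i, ‖P k u‖ ^ 2 = 0 := by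
    rwa [← Finset.add_sum_erase _ _ (Finset.mem_univ i), hu, add_eq_left] at htotal
  simpa using (Finset.sum_eq_zero_iff_of_nonneg fun k _ => by positivity).1 hrest j
    (Finset.mem_erase.2 ⟨hij.symm, Finset.mem_univ j⟩)

theorem orthogonalFamily_range_of_sum_eq_id (hidem : ∀ k, P k ∘ₗ P k = P k)
    (hsym : ∀ k, (P k).IsSymmetric) (hsum : ∑ k, P k = LinearMap.id) :
    OrthogonalFamily 𝕜 (fun k => LinearMap.range (P k))
      fun k => (LinearMap.range (P k)).subtypeₗᵢ := by
  rintro i j hij ⟨_, x, rfl⟩ ⟨_, y, rfl⟩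
  change ⟪P i x, P j y⟫_𝕜 = 0
  rw [← hsym j, LinearMap.apply_apply_eq_zero_of_sum_eq_id hidem hsym hsum hij, inner_zero_left]

theorem exists_orthonormal_forall_mem_range_of_sum_eq_id [FiniteDimensional 𝕜 E] {d : ℕ}
    (hd : Module.finrank 𝕜 E = d) (hidem : ∀ k, P k ∘ₗ P k = P k)
    (hsym : ∀ k, (P k).IsSymmetric) (hsum : ∑ k, P k = LinearMap.id) :
    ∃ (M : Fin d → E) (f : Fin d → ι), Orthonormal 𝕜 M ∧ ∀ a, M a ∈ LinearMap.range (P (f a)) := by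
  classical
  have hfam := orthogonalFamily_range_of_sum_eq_id hidem hsym hsum
  have hint : DirectSum.IsInternal fun k => LinearMap.range (P k) := by
    refine DirectSum.isInternal_submodule_of_iSupIndep_of_iSup_eq_top hfam.independent ?_
    refine Submodule.eq_top_iff'.2 fun x => ?_
    simpa [← LinearMap.sum_apply, hsum] using
      Submodule.sum_mem_iSup fun k => LinearMap.mem_range_self (P k) x
  exact ⟨_, _, (hint.subordinateOrthonormalBasis hd hfam).orthonormal,
    fun a => hint.subordinateOrthonormalBasis_subordinate hd a hfam⟩

end OrthogonalProjections

section PPIncompatible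

variable {d : ℕ} {ψ0 ψ1 ψ2 : EuclideanSpace ℂ (Fin d)}

theorem PPIncompatible.swap (h : PPIncompatible ψ0 ψ1 ψ2) : PPIncompatible ψ0 ψ2 ψ1 := by
  obtain ⟨P0, P1, P2, hP0, hP1, hP2, hsum, hz0, hz1, hz2⟩ := h
  exact ⟨P0, P2, P1, hP0, hP2, hP1, by rwa [add_right_comm], hz0, hz2, hz1⟩

theorem PPIncompatible.exists_orthonormal_inner_eq_zero (h : PPIncompatible ψ0 ψ1 ψ2) :
    ∃ (M : Fin d → EuclideanSpace ℂ (Fin d)) (f : Fin d → Fin 3),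
      Orthonormal ℂ M ∧ ∀ a, ⟪M a, ![ψ0, ψ1, ψ2] (f a)⟫_ℂ = 0 := by
  obtain ⟨P0, P1, P2, hP0, hP1, hP2, hsum, hz0, hz1, hz2⟩ := h
  have hP : ∀ k, IsOrthogonalProjection (![P0, P1, P2] k) := by
    intro k; fin_cases k <;> assumption
  have hz : ∀ k, ![P0, P1, P2] k (![ψ0, ψ1, ψ2] k) = 0 := by
    intro k; fin_cases k <;> assumption
  obtain ⟨M, f, hM, hMf⟩ := exists_orthonormal_forall_mem_range_of_sum_eq_id
    finrank_euclideanSpace_fin (fun k => (hP k).1) (fun k => (hP k).2)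
    (by simpa [Fin.sum_univ_three] using hsum)
  refine ⟨M, f, hM, fun a => ?_⟩
  obtain ⟨x, hx⟩ := hMf a
  rw [← hx, (hP (f a)).2, hz, inner_zero_right]

end PPIncompatible

namespace OntModel

variable {d : ℕ} (m : OntModel d)

theorem integrable_μ {ψ : EuclideanSpace ℂ (Fin d)} (hψ : ‖ψ‖ = 1) : Integrable (m.μ ψ) m.ν :=
  Integrable.of_integral_ne_zero (by rw [m.μ_norm ψ hψ]; exact one_ne_zero)

theorem ξ_le_one {M : Fin d → EuclideanSpace ℂ (Fin d)} (hM : Orthonormal ℂ M) (i : Fin d)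
    (l : m.Lam) : m.ξ M i l ≤ 1 :=
  (Finset.single_le_sum (fun j _ => m.ξ_nonneg M j l) (Finset.mem_univ i)).trans_eq
    (m.ξ_sum M hM l)

end OntModel

namespace Reproduces

variable {d : ℕ} {m : OntModel d}

theorem ξ_mul_μ_ae_eq_zero (hm : Reproduces m) {ψ : EuclideanSpace ℂ (Fin d)} (hψ : ‖ψ‖ = 1)
    {M : Fin d → EuclideanSpace ℂ (Fin d)} (hM : Orthonormal ℂ M) {i : Fin d}
    (h : ⟪M i, ψ⟫_ℂ = 0) : (fun l => m.ξ M i l * m.μ ψ l) =ᵐ[m.ν] 0 := by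
  have hnonneg : ∀ l, 0 ≤ m.ξ M i l * m.μ ψ l := fun l =>
    mul_nonneg (m.ξ_nonneg M i l) (m.μ_nonneg ψ l)
  have hint : Integrable (fun l => m.ξ M i l * m.μ ψ l) m.ν :=
    (m.integrable_μ hψ).mono' ((m.ξ_meas M i).mul (m.μ_meas ψ)).aestronglyMeasurable
      (Eventually.of_forall fun l => by
        rw [Real.norm_of_nonneg (hnonneg l)]
        exact mul_le_of_le_one_left (m.μ_nonneg ψ l) (m.ξ_le_one hM i l))
  refine (integral_eq_zero_iff_of_nonneg hnonneg hint).1 ?_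
  rw [hm ψ hψ M hM i, h, norm_zero, zero_pow two_ne_zero]

theorem ae_exists_μ_eq_zero (hm : Reproduces m) {ι : Type*} {φ : ι → EuclideanSpace ℂ (Fin d)}
    (hφ : ∀ k, ‖φ k‖ = 1) {M : Fin d → EuclideanSpace ℂ (Fin d)} (hM : Orthonormal ℂ M)
    {f : Fin d → ι} (h : ∀ a, ⟪M a, φ (f a)⟫_ℂ = 0) :
    ∀ᵐ l ∂m.ν, ∃ k, m.μ (φ k) l = 0 := by
  filter_upwards [ae_all_iff.2 fun a => hm.ξ_mul_μ_ae_eq_zero (hφ (f a)) hM (h a)] with l hl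
  obtain ⟨a, -, ha⟩ := Finset.exists_ne_zero_of_sum_ne_zero
    ((m.ξ_sum M hM l).trans_ne one_ne_zero)
  exact ⟨f a, (mul_eq_zero.1 (hl a)).resolve_left ha⟩

theorem ae_μ_eq_zero_of_ppIncompatible (hm : Reproduces m) {ψ0 ψ1 ψ2 : EuclideanSpace ℂ (Fin d)}
    (h0 : ‖ψ0‖ = 1) (h1 : ‖ψ1‖ = 1) (h2 : ‖ψ2‖ = 1) (h : PPIncompatible ψ0 ψ1 ψ2) :
    ∀ᵐ l ∂m.ν, m.μ ψ0 l = 0 ∨ m.μ ψ1 l = 0 ∨ m.μ ψ2 l = 0 := by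
  obtain ⟨M, f, hM, hMf⟩ := h.exists_orthonormal_inner_eq_zero
  have hφ : ∀ k, ‖![ψ0, ψ1, ψ2] k‖ = 1 := by
    intro k; fin_cases k <;> assumption
  filter_upwards [hm.ae_exists_μ_eq_zero hφ hM hMf] with l ⟨k, hk⟩
  fin_cases k <;> simp_all

theorem sum_omegaC_le_one (hm : Reproduces m) {ι : Type*} {s : Finset ι}
    {φ0 : EuclideanSpace ℂ (Fin d)} {φ : ι → EuclideanSpace ℂ (Fin d)}
    (h0 : ‖φ0‖ = 1) (hφ : ∀ j ∈ s, ‖φ j‖ = 1)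
    (hpp : ∀ j ∈ s, ∀ k ∈ s, j ≠ k → PPIncompatible φ0 (φ j) (φ k)) :
    ∑ j ∈ s, omegaC m φ0 (φ j) ≤ 1 := by
  have hint : ∀ j ∈ s, Integrable (fun l => min (m.μ φ0 l) (m.μ (φ j) l)) m.ν := fun j hj =>
    (m.integrable_μ h0).inf (m.integrable_μ (hφ j hj))
  have hae : ∀ᵐ l ∂m.ν, ∀ j ∈ s, ∀ k ∈ s, j ≠ k →
      m.μ φ0 l = 0 ∨ m.μ (φ j) l = 0 ∨ m.μ (φ k) l = 0 := by
    simp only [eventually_all_finset, eventually_imp_distrib_left]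
    exact fun j hj k hk hjk =>
      hm.ae_μ_eq_zero_of_ppIncompatible h0 (hφ j hj) (hφ k hk) (hpp j hj k hk hjk)
  calc ∑ j ∈ s, omegaC m φ0 (φ j)
      = ∫ l, ∑ j ∈ s, min (m.μ φ0 l) (m.μ (φ j) l) ∂m.ν := (integral_finsetSum s hint).symm
    _ ≤ ∫ l, m.μ φ0 l ∂m.ν :=
      integral_mono_ae (integrable_finsetSum s hint) (m.integrable_μ h0) <| hae.mono
        fun l hl => Finset.sum_min_le_of_forall_ne (m.μ_nonneg φ0 l)
          (fun j _ => m.μ_nonneg (φ j) l) hl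
    _ = 1 := m.μ_norm φ0 h0

end Reproduces

theorem omegaQ_nonneg {d : ℕ} (ψ φ : EuclideanSpace ℂ (Fin d)) : 0 ≤ omegaQ ψ φ :=
  sub_nonneg.2 (Real.sqrt_le_one.2 (sub_le_self _ (sq_nonneg _)))

theorem eq8_general (d n : ℕ)
    (ψ : ℕ → EuclideanSpace ℂ (Fin d))
    (hunit : ∀ j, j ≤ n → ‖ψ j‖ = 1)
    (hPP : ∀ j1 j2, 1 ≤ j1 → j1 < j2 → j2 ≤ n → PPIncompatible (ψ 0) (ψ j1) (ψ j2))
    (heq : ∀ j, 1 ≤ j → j ≤ n →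
      ‖(inner ℂ (ψ 0) (ψ j) : ℂ)‖ = ‖(inner ℂ (ψ 0) (ψ 1) : ℂ)‖)
    (m : OntModel d) (hm : Reproduces m) :
    (1 / (n : ℝ)) * ∑ j ∈ Finset.Icc 1 n, kappa m (ψ 0) (ψ j) ≤
      1 / (n * omegaQ (ψ 0) (ψ 1)) := by
  have hsum : ∑ j ∈ Finset.Icc 1 n, omegaC m (ψ 0) (ψ j) ≤ 1 := by
    refine hm.sum_omegaC_le_one (hunit 0 n.zero_le)
      (fun j hj => hunit j (Finset.mem_Icc.1 hj).2) fun j hj k hk hjk => ?_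
    rw [Finset.mem_Icc] at hj hk
    rcases hjk.lt_or_gt with hlt | hgt
    · exact hPP j k hj.1 hlt hk.2
    · exact (hPP k j hk.1 hgt hj.2).swap
  have hkappa : ∑ j ∈ Finset.Icc 1 n, kappa m (ψ 0) (ψ j) =
      (∑ j ∈ Finset.Icc 1 n, omegaC m (ψ 0) (ψ j)) / omegaQ (ψ 0) (ψ 1) := by
    rw [Finset.sum_div]
    refine Finset.sum_congr rfl fun j hj => ?_
    rw [Finset.mem_Icc] at hj
    rw [kappa, omegaQ, omegaQ, heq j hj.1 hj.2]
  calc (1 / (n : ℝ)) * ∑ j ∈ Finset.Icc 1 n, kappa m (ψ 0) (ψ j)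
      ≤ 1 / n * (1 / omegaQ (ψ 0) (ψ 1)) := by
        rw [hkappa]
        gcongr
        exact omegaQ_nonneg _ _
    _ = 1 / (n * omegaQ (ψ 0) (ψ 1)) := one_div_mul_one_div _ _

/-- **Eq. (8)**: if every triple `(ψ_0, ψ_{j1}, ψ_{j2})` is PP-incompatible and all quantum
overlaps with `ψ_0` are equal and nonzero, then in every ontological model reproducing quantum
measurement statistics, the average ratio of classical-to-quantum overlaps is at most
`1/(n·ω_Q(ψ_0, ψ_1))`. -/
theorem eq8 (d n : ℕ) (hn : 2 ≤ n)
    (ψ : ℕ → EuclideanSpace ℂ (Fin d))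
    (hunit : ∀ j, j ≤ n → ‖ψ j‖ = 1)
    (hPP : ∀ j1 j2, 1 ≤ j1 → j1 < j2 → j2 ≤ n → PPIncompatible (ψ 0) (ψ j1) (ψ j2))
    (heq : ∀ j, 1 ≤ j → j ≤ n →
      ‖(inner ℂ (ψ 0) (ψ j) : ℂ)‖ = ‖(inner ℂ (ψ 0) (ψ 1) : ℂ)‖)
    (hne : (inner ℂ (ψ 0) (ψ 1) : ℂ) ≠ 0)
    (m : OntModel d) (hm : Reproduces m) :
    (1 / (n : ℝ)) * ∑ j ∈ Finset.Icc 1 n, kappa m (ψ 0) (ψ j) ≤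
      1 / (n * omegaQ (ψ 0) (ψ 1)) :=
  eq8_general d n ψ hunit hPP heq m hm
end
end

section
/- Let (Λ, ν) be a measure space, let n ≥ 2, and let μ_0, μ_1, …, μ_n : Λ → ℝ be measurable functions with μ_j ≥ 0 pointwise and ∫ μ_j dν = 1 for every j. For each pair 1 ≤ j1 < j2 ≤ n let ξ^{(j1,j2)}_0, ξ^{(j1,j2)}_1, ξ^{(j1,j2)}_2 : Λ → ℝ be measurable with ξ^{(j1,j2)}_i ≥ 0 pointwise and ξ^{(j1,j2)}_0 + ξ^{(j1,j2)}_1 + ξ^{(j1,j2)}_2 = 1 pointwise, and set p^{(j1,j2)}_0 = ∫ ξ^{(j1,j2)}_0 μ_0 dν, p^{(j1,j2)}_1 = ∫ ξ^{(j1,j2)}_1 μ_{j1} dν, p^{(j1,j2)}_2 = ∫ ξ^{(j1,j2)}_2 μ_{j2} dν. Suppose ψ_0, ψ_1, …, ψ_n are unit vectors in ℂ^d with ⟨ψ_0, ψ_j⟩ ≠ 0 for all j and κ_0 is a real number such that ∫ min(μ_0, μ_j) dν ≥ κ_0 · ω_Q(ψ_0, ψ_j) for all 1 ≤ j ≤ n,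 where ω_Q(ψ_0, ψ_j) = 1 − √(1 − |⟨ψ_0, ψ_j⟩|²). Then κ_0 ≤ (1 + ∑_{1 ≤ j1 < j2 ≤ n} (p^{(j1,j2)}_0 + p^{(j1,j2)}_1 + p^{(j1,j2)}_2)) / (∑_{j=1}^{n} ω_Q(ψ_0, ψ_j)). -/
noncomputable section

/-! Pointwise on `Λ`, put `m_j = min(μ_0, μ_j)` and let `k` maximise `m_j`. Every `m_j` with
`j ≠ k` equals `min(m_j, m_k) = min(μ_0, μ_j, μ_k)`, so
`∑_j m_j ≤ μ_0 + ∑_{j₁<j₂} min(μ_0, μ_{j₁}, μ_{j₂})`. Integrating gives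
`∑_j ∫ min(μ_0, μ_j) ≤ 1 + ∑_{j₁<j₂} ∫ min(μ_0, μ_{j₁}, μ_{j₂})`, and each triple overlap is at
most `p_0 + p_1 + p_2`, because `min(μ_0, μ_{j₁}, μ_{j₂}) = ∑_i ξ_i · min(…) ≤ ∑_i ξ_i μ_{j_i}`.
Finally `κ₀ ∑_j ω_Q(ψ_0, ψ_j) ≤ ∑_j ∫ min(μ_0, μ_j)`, and the `ω_Q(ψ_0, ψ_j)` are positive since
`⟨ψ_0, ψ_j⟩ ≠ 0`. -/

open Finset MeasureTheory

theorem sum_le_add_sum_min {ι : Type*} [LinearOrder ι] (s : Finset ι) (m : ι → ℝ) {a : ℝ}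
    (ha : 0 ≤ a) (hm0 : ∀ j ∈ s, 0 ≤ m j) (hma : ∀ j ∈ s, m j ≤ a) :
    ∑ j ∈ s, m j ≤ a + ∑ j₁ ∈ s, ∑ j₂ ∈ s with j₁ < j₂, min (m j₁) (m j₂) := by
  rcases s.eq_empty_or_nonempty with rfl | hs
  · simpa using ha
  obtain ⟨k, hk, hk_max⟩ := s.exists_max_image m hs
  set pairs := fun j₁ => ∑ j₂ ∈ s with j₁ < j₂, min (m j₁) (m j₂)
  have pairs_nonneg : ∀ j ∈ s, 0 ≤ pairs j := fun j hj =>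
    sum_nonneg fun i hi => le_min (hm0 j hj) (hm0 i (mem_filter.1 hi).1)
  have below : ∑ j ∈ s with j < k, m j ≤ ∑ j ∈ s with j < k, pairs j := by
    refine sum_le_sum fun j hj => ?_
    rw [mem_filter] at hj
    calc m j = min (m j) (m k) := (min_eq_left (hk_max j hj.1)).symm
      _ ≤ pairs j := single_le_sum (f := fun i => min (m j) (m i))
          (fun i hi => le_min (hm0 j hj.1) (hm0 i (mem_filter.1 hi).1))
          (mem_filter.2 ⟨hk, hj.2⟩)
  have above : ∑ j ∈ s with k < j, m j = pairs k :=
    sum_congr rfl fun j hj => (min_eq_right (hk_max j (mem_filter.1 hj).1)).symm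
  have hsplit : ∑ j ∈ s, m j = ∑ j ∈ s with j < k, m j + m k + ∑ j ∈ s with k < j, m j := by
    have hnot : {j ∈ s | ¬j < k} = insert k {j ∈ s | k < j} := by
      ext j
      simp only [mem_filter, mem_insert, not_lt, le_iff_eq_or_lt]
      aesop
    rw [← sum_filter_add_sum_filter_not s (· < k), hnot,
      sum_insert (fun h => lt_irrefl k (mem_filter.1 h).2), add_assoc]
  have pairs_le : ∑ j ∈ s with j < k, pairs j + pairs k ≤ ∑ j ∈ s, pairs j := by
    have hk_notin : k ∉ {j ∈ s | j < k} := fun h => lt_irrefl k (mem_filter.1 h).2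
    rw [add_comm, ← sum_insert hk_notin]
    exact sum_le_sum_of_subset_of_nonneg (insert_subset hk (filter_subset _ _))
      fun j hj _ => pairs_nonneg j hj
  linarith [hma k hk]

section Integrals

variable {Λ : Type*} [MeasurableSpace Λ] {ν : Measure Λ}

theorem sum_integral_min_le_integral_add_sum_integral_min {ι : Type*} [LinearOrder ι]
    (s : Finset ι) {f₀ : Λ → ℝ} {f : ι → Λ → ℝ} (hf₀ : Integrable f₀ ν)
    (hf : ∀ j ∈ s, Integrable (f j) ν) (hf₀_nonneg : ∀ l, 0 ≤ f₀ l)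
    (hf_nonneg : ∀ j ∈ s, ∀ l, 0 ≤ f j l) :
    ∑ j ∈ s, ∫ l, min (f₀ l) (f j l) ∂ν ≤
      ∫ l, f₀ l ∂ν + ∑ j₁ ∈ s, ∑ j₂ ∈ s with j₁ < j₂,
        ∫ l, min (f₀ l) (min (f j₁ l) (f j₂ l)) ∂ν := by
  have hmin : ∀ j ∈ s, Integrable (fun l => min (f₀ l) (f j l)) ν :=
    fun j hj => hf₀.inf (hf j hj)
  have hmin₃ : ∀ j₁ ∈ s, ∀ j₂ ∈ {j ∈ s | j₁ < j},
      Integrable (fun l => min (f₀ l) (min (f j₁ l) (f j₂ l))) ν :=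
    fun j₁ hj₁ j₂ hj₂ => hf₀.inf ((hf j₁ hj₁).inf (hf j₂ (mem_filter.1 hj₂).1))
  have hpairs : ∀ j₁ ∈ s, Integrable
      (fun l => ∑ j₂ ∈ s with j₁ < j₂, min (f₀ l) (min (f j₁ l) (f j₂ l))) ν :=
    fun j₁ hj₁ => integrable_finsetSum _ (hmin₃ j₁ hj₁)
  calc ∑ j ∈ s, ∫ l, min (f₀ l) (f j l) ∂ν = ∫ l, ∑ j ∈ s, min (f₀ l) (f j l) ∂ν :=
        (integral_finsetSum _ hmin).symm
    _ ≤ ∫ l, f₀ l + ∑ j₁ ∈ s, ∑ j₂ ∈ s with j₁ < j₂, min (f₀ l) (min (f j₁ l) (f j₂ l)) ∂ν := by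
        refine integral_mono (integrable_finsetSum _ hmin)
          (hf₀.add (integrable_finsetSum _ hpairs)) fun l => ?_
        simpa only [min_min_min_comm, min_self] using
          sum_le_add_sum_min s (fun j => min (f₀ l) (f j l)) (hf₀_nonneg l)
            (fun j hj => le_min (hf₀_nonneg l) (hf_nonneg j hj l)) (fun j _ => min_le_left _ _)
    _ = _ := by
        rw [integral_add hf₀ (integrable_finsetSum _ hpairs), integral_finsetSum _ hpairs]
        exact congrArg _ (sum_congr rfl fun j₁ hj₁ => integral_finsetSum _ (hmin₃ j₁ hj₁))

theorem integral_le_sum_integral_mul_of_sum_eq_one {ι : Type*} [Fintype ι]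
    {g : Λ → ℝ} {f ξ : ι → Λ → ℝ} (hg : Integrable g ν) (hf : ∀ i, Integrable (f i) ν)
    (hξ_meas : ∀ i, AEStronglyMeasurable (ξ i) ν) (hξ_nonneg : ∀ i l, 0 ≤ ξ i l)
    (hξ_sum : ∀ l, ∑ i, ξ i l = 1) (hgf : ∀ i l, g l ≤ f i l) :
    ∫ l, g l ∂ν ≤ ∑ i, ∫ l, ξ i l * f i l ∂ν := by
  have hξ_le_one : ∀ i l, ‖ξ i l‖ ≤ 1 := fun i l => by
    rw [Real.norm_of_nonneg (hξ_nonneg i l), ← hξ_sum l]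
    exact single_le_sum (fun j _ => hξ_nonneg j l) (mem_univ i)
  have hint : ∀ i ∈ univ, Integrable (fun l => ξ i l * f i l) ν := fun i _ =>
    (hf i).bdd_mul (hξ_meas i) (ae_of_all _ (hξ_le_one i))
  rw [← integral_finsetSum _ hint]
  refine integral_mono hg (integrable_finsetSum _ hint) fun l => ?_
  calc g l = ∑ i, ξ i l * g l := by rw [← sum_mul, hξ_sum, one_mul]
    _ ≤ ∑ i, ξ i l * f i l :=
      sum_le_sum fun i _ => mul_le_mul_of_nonneg_left (hgf i l) (hξ_nonneg i l)

theorem integral_min_min_le_of_sum_three_eq_one {f₀ f₁ f₂ : Λ → ℝ} {ξ : Fin 3 → Λ → ℝ}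
    (hf₀ : Integrable f₀ ν) (hf₁ : Integrable f₁ ν) (hf₂ : Integrable f₂ ν)
    (hξ_meas : ∀ i, AEStronglyMeasurable (ξ i) ν) (hξ_nonneg : ∀ i l, 0 ≤ ξ i l)
    (hξ_sum : ∀ l, ξ 0 l + ξ 1 l + ξ 2 l = 1) :
    ∫ l, min (f₀ l) (min (f₁ l) (f₂ l)) ∂ν ≤
      (∫ l, ξ 0 l * f₀ l ∂ν) + (∫ l, ξ 1 l * f₁ l ∂ν) + (∫ l, ξ 2 l * f₂ l ∂ν) := by
  simpa [Fin.sum_univ_three] using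
    integral_le_sum_integral_mul_of_sum_eq_one (f := ![f₀, f₁, f₂]) (hf₀.inf (hf₁.inf hf₂))
      (by simp [Fin.forall_fin_succ, hf₀, hf₁, hf₂]) hξ_meas hξ_nonneg
      (by simpa [Fin.sum_univ_three] using hξ_sum) (by simp [Fin.forall_fin_succ])

end Integrals

theorem omegaQ_pos {d : ℕ} {ψ φ : EuclideanSpace ℂ (Fin d)} (h : (inner ℂ ψ φ : ℂ) ≠ 0) :
    0 < omegaQ ψ φ := by
  have hsqrt : Real.sqrt (1 - ‖(inner ℂ ψ φ : ℂ)‖ ^ 2) < 1 := by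
    rw [Real.sqrt_lt' one_pos]
    linarith [pow_pos (norm_pos_iff.2 h) 2]
  unfold omegaQ
  linarith

theorem eq10_general {Λ : Type*} [MeasurableSpace Λ] (ν : MeasureTheory.Measure Λ)
    (d n : ℕ) (hn : 2 ≤ n)
    (μ : ℕ → Λ → ℝ)
    (hμ_nonneg : ∀ j, j ≤ n → ∀ l, 0 ≤ μ j l)
    (hμ_norm : ∀ j, j ≤ n → ∫ l, μ j l ∂ν = 1)
    (ξ : ℕ → ℕ → Fin 3 → Λ → ℝ)
    (hξ_meas : ∀ j1 j2, 1 ≤ j1 → j1 < j2 → j2 ≤ n → ∀ i, Measurable (ξ j1 j2 i))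
    (hξ_nonneg : ∀ j1 j2, 1 ≤ j1 → j1 < j2 → j2 ≤ n → ∀ i l, 0 ≤ ξ j1 j2 i l)
    (hξ_sum : ∀ j1 j2, 1 ≤ j1 → j1 < j2 → j2 ≤ n →
      ∀ l, ξ j1 j2 0 l + ξ j1 j2 1 l + ξ j1 j2 2 l = 1)
    (ψ : ℕ → EuclideanSpace ℂ (Fin d))
    (hne : ∀ j, 1 ≤ j → j ≤ n → (inner ℂ (ψ 0) (ψ j) : ℂ) ≠ 0)
    (κ₀ : ℝ)
    (hκ₀ : ∀ j, 1 ≤ j → j ≤ n →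
      κ₀ * omegaQ (ψ 0) (ψ j) ≤ ∫ l, min (μ 0 l) (μ j l) ∂ν) :
    κ₀ ≤ (1 + ∑ j1 ∈ Finset.Icc 1 n, ∑ j2 ∈ Finset.Ioc j1 n,
        ((∫ l, ξ j1 j2 0 l * μ 0 l ∂ν) + (∫ l, ξ j1 j2 1 l * μ j1 l ∂ν) +
          (∫ l, ξ j1 j2 2 l * μ j2 l ∂ν))) /
      (∑ j ∈ Finset.Icc 1 n, omegaQ (ψ 0) (ψ j)) := by
  have hint : ∀ j ≤ n, Integrable (μ j) ν := fun j hj =>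
    Integrable.of_integral_ne_zero (by rw [hμ_norm j hj]; exact one_ne_zero)
  have hIoc : ∀ j₁, {j ∈ Icc 1 n | j₁ < j} = Ioc j₁ n := fun j₁ => by
    ext j; simp only [mem_filter, mem_Icc, mem_Ioc]; omega
  have hden : 0 < ∑ j ∈ Icc 1 n, omegaQ (ψ 0) (ψ j) :=
    sum_pos (fun j hj => omegaQ_pos (hne j (mem_Icc.1 hj).1 (mem_Icc.1 hj).2))
      ⟨1, mem_Icc.2 ⟨le_rfl, by omega⟩⟩
  rw [le_div_iff₀ hden, mul_sum]
  calc ∑ j ∈ Icc 1 n, κ₀ * omegaQ (ψ 0) (ψ j)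
      ≤ ∑ j ∈ Icc 1 n, ∫ l, min (μ 0 l) (μ j l) ∂ν :=
        sum_le_sum fun j hj => hκ₀ j (mem_Icc.1 hj).1 (mem_Icc.1 hj).2
    _ ≤ 1 + ∑ j₁ ∈ Icc 1 n, ∑ j₂ ∈ Ioc j₁ n, ∫ l, min (μ 0 l) (min (μ j₁ l) (μ j₂ l)) ∂ν := by
        simpa only [hμ_norm 0 (Nat.zero_le n), hIoc] using
          sum_integral_min_le_integral_add_sum_integral_min (Icc 1 n) (hint 0 (Nat.zero_le n))
            (fun j hj => hint j (mem_Icc.1 hj).2) (hμ_nonneg 0 (Nat.zero_le n))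
            (fun j hj => hμ_nonneg j (mem_Icc.1 hj).2)
    _ ≤ _ := by
        gcongr with j₁ hj₁ j₂ hj₂
        obtain ⟨h1, hn₁⟩ := mem_Icc.1 hj₁
        obtain ⟨h12, hn₂⟩ := mem_Ioc.1 hj₂
        exact integral_min_min_le_of_sum_three_eq_one (hint 0 (Nat.zero_le n)) (hint j₁ hn₁)
          (hint j₂ hn₂) (fun i => (hξ_meas j₁ j₂ h1 h12 hn₂ i).aestronglyMeasurable)
          (hξ_nonneg j₁ j₂ h1 h12 hn₂) (hξ_sum j₁ j₂ h1 h12 hn₂)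

/-- **Eq. (10)**: the experimentally testable bound on the ratio of classical-to-quantum
overlaps. If `κ_0 · ω_Q(ψ_0, ψ_j) ≤ ∫ min(μ_0, μ_j) dν` for all `j`, then `κ_0` is bounded by
`(1 + ∑_{j1<j2} (p_0 + p_1 + p_2)) / ∑_j ω_Q(ψ_0, ψ_j)`. -/
theorem eq10 {Λ : Type*} [MeasurableSpace Λ] (ν : MeasureTheory.Measure Λ)
    (d n : ℕ) (hn : 2 ≤ n)
    (μ : ℕ → Λ → ℝ)
    (hμ_meas : ∀ j, j ≤ n → Measurable (μ j))
    (hμ_nonneg : ∀ j, j ≤ n → ∀ l, 0 ≤ μ j l)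
    (hμ_norm : ∀ j, j ≤ n → ∫ l, μ j l ∂ν = 1)
    (ξ : ℕ → ℕ → Fin 3 → Λ → ℝ)
    (hξ_meas : ∀ j1 j2, 1 ≤ j1 → j1 < j2 → j2 ≤ n → ∀ i, Measurable (ξ j1 j2 i))
    (hξ_nonneg : ∀ j1 j2, 1 ≤ j1 → j1 < j2 → j2 ≤ n → ∀ i l, 0 ≤ ξ j1 j2 i l)
    (hξ_sum : ∀ j1 j2, 1 ≤ j1 → j1 < j2 → j2 ≤ n →
      ∀ l, ξ j1 j2 0 l + ξ j1 j2 1 l + ξ j1 j2 2 l = 1)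
    (ψ : ℕ → EuclideanSpace ℂ (Fin d))
    (hunit : ∀ j, j ≤ n → ‖ψ j‖ = 1)
    (hne : ∀ j, 1 ≤ j → j ≤ n → (inner ℂ (ψ 0) (ψ j) : ℂ) ≠ 0)
    (κ₀ : ℝ)
    (hκ₀ : ∀ j, 1 ≤ j → j ≤ n →
      κ₀ * omegaQ (ψ 0) (ψ j) ≤ ∫ l, min (μ 0 l) (μ j l) ∂ν) :
    κ₀ ≤ (1 + ∑ j1 ∈ Finset.Icc 1 n, ∑ j2 ∈ Finset.Ioc j1 n,
        ((∫ l, ξ j1 j2 0 l * μ 0 l ∂ν) + (∫ l, ξ j1 j2 1 l * μ j1 l ∂ν) +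
          (∫ l, ξ j1 j2 2 l * μ j2 l ∂ν))) /
      (∑ j ∈ Finset.Icc 1 n, omegaQ (ψ 0) (ψ j)) :=
  eq10_general ν d n hn μ hμ_nonneg hμ_norm ξ hξ_meas hξ_nonneg hξ_sum ψ hne κ₀ hκ₀
end
end

section
/- Let d ≥ 2 and let ψ, φ be unit vectors in ℂ^d. Then there exist an orthonormal basis (m_0, …, m_{d−1}) of ℂ^d and a subset S ⊆ {0, …, d−1} such that ∑_{i ∈ S} |⟨m_i, ψ⟩|² + ∑_{i ∉ S} |⟨m_i, φ⟩|² = 1 − √(1 − |⟨ψ, φ⟩|²). -/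
noncomputable section

/-! Guessing `ψ` on one unit vector `m` and `φ` on its orthogonal complement errs with probability
`|⟨m, ψ⟩|² + 1 - |⟨m, φ⟩|²`, so it suffices to find a unit `m` with
`|⟨m, φ⟩|² - |⟨m, ψ⟩|² = D := √(1 - |⟨ψ, φ⟩|²)`, the top eigenvalue of `|φ⟩⟨φ| - |ψ⟩⟨ψ|`.
Solving the eigenvalue equation in `span {ψ, φ}` gives the eigenvector `φ - ⟨ψ, φ⟩ / (1 + D) • ψ`,
of squared norm `2 D² / (1 + D)`; when `D = 0` the states are parallel and `m = ψ` works. Any unit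
vector extends to an orthonormal basis. -/

open scoped InnerProductSpace ComplexConjugate
open Module

section

variable (𝕜 : Type*) {E : Type*} [RCLike 𝕜] [NormedAddCommGroup E] [InnerProductSpace 𝕜 E]

/-- For unit vectors this is the trace distance `½ ‖|ψ⟩⟨ψ| - |φ⟩⟨φ|‖₁` of the two pure states. -/
def pureStateTraceDistance (ψ φ : E) : ℝ := √(1 - ‖⟪ψ, φ⟫_𝕜‖ ^ 2)

def helstromVector (ψ φ : E) : E :=
  φ - (⟪ψ, φ⟫_𝕜 / (1 + pureStateTraceDistance 𝕜 ψ φ : ℝ)) • ψ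

theorem pureStateTraceDistance_nonneg (ψ φ : E) : 0 ≤ pureStateTraceDistance 𝕜 ψ φ :=
  Real.sqrt_nonneg _

variable {ψ φ : E}

theorem sq_pureStateTraceDistance (hψ : ‖ψ‖ = 1) (hφ : ‖φ‖ = 1) :
    pureStateTraceDistance 𝕜 ψ φ ^ 2 = 1 - ‖⟪ψ, φ⟫_𝕜‖ ^ 2 := by
  have h : ‖⟪ψ, φ⟫_𝕜‖ ≤ 1 := by simpa [hψ, hφ] using norm_inner_le_norm (𝕜 := 𝕜) ψ φ
  exact Real.sq_sqrt (by nlinarith [norm_nonneg ⟪ψ, φ⟫_𝕜])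

variable {𝕜}

theorem inner_helstromVector_right (hψ : ‖ψ‖ = 1) (hφ : ‖φ‖ = 1) :
    ⟪helstromVector 𝕜 ψ φ, φ⟫_𝕜 = pureStateTraceDistance 𝕜 ψ φ := by
  have hD := sq_pureStateTraceDistance 𝕜 hψ hφ
  have hD0 := pureStateTraceDistance_nonneg 𝕜 ψ φ
  rw [helstromVector, inner_sub_left, inner_smul_left, inner_self_eq_norm_sq_to_K, hφ,
    map_div₀, RCLike.conj_ofReal, div_mul_eq_mul_div, RCLike.conj_mul]
  norm_cast
  field_simp
  linear_combination -hD

theorem inner_helstromVector_left (hψ : ‖ψ‖ = 1) :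
    ⟪helstromVector 𝕜 ψ φ, ψ⟫_𝕜 = conj ⟪ψ, φ⟫_𝕜 *
      (pureStateTraceDistance 𝕜 ψ φ / (1 + pureStateTraceDistance 𝕜 ψ φ) : ℝ) := by
  have h1D : (1 + pureStateTraceDistance 𝕜 ψ φ : 𝕜) ≠ 0 := by
    exact_mod_cast (add_pos_of_pos_of_nonneg one_pos (pureStateTraceDistance_nonneg 𝕜 ψ φ)).ne'
  rw [helstromVector, inner_sub_left, inner_smul_left, inner_self_eq_norm_sq_to_K, hψ,
    map_div₀, RCLike.conj_ofReal, ← inner_conj_symm]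
  push_cast
  field_simp
  ring

theorem sq_norm_helstromVector (hψ : ‖ψ‖ = 1) (hφ : ‖φ‖ = 1) :
    ‖helstromVector 𝕜 ψ φ‖ ^ 2 =
      2 * pureStateTraceDistance 𝕜 ψ φ ^ 2 / (1 + pureStateTraceDistance 𝕜 ψ φ) := by
  have hD := sq_pureStateTraceDistance 𝕜 hψ hφ
  have hD0 := pureStateTraceDistance_nonneg 𝕜 ψ φ
  suffices ((‖helstromVector 𝕜 ψ φ‖ ^ 2 : ℝ) : 𝕜) =
      ((2 * pureStateTraceDistance 𝕜 ψ φ ^ 2 / (1 + pureStateTraceDistance 𝕜 ψ φ) : ℝ) : 𝕜) by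
    exact_mod_cast this
  rw [RCLike.ofReal_pow, ← inner_self_eq_norm_sq_to_K]
  nth_rw 2 [helstromVector]
  rw [inner_sub_right, inner_smul_right, inner_helstromVector_right hψ hφ,
    inner_helstromVector_left hψ, ← mul_assoc, div_mul_eq_mul_div, RCLike.mul_conj]
  norm_cast
  field_simp
  linear_combination (-pureStateTraceDistance 𝕜 ψ φ) * hD

theorem sq_norm_inner_helstromVector_sub (hψ : ‖ψ‖ = 1) (hφ : ‖φ‖ = 1) :
    ‖⟪helstromVector 𝕜 ψ φ, φ⟫_𝕜‖ ^ 2 - ‖⟪helstromVector 𝕜 ψ φ, ψ⟫_𝕜‖ ^ 2 =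
      pureStateTraceDistance 𝕜 ψ φ * ‖helstromVector 𝕜 ψ φ‖ ^ 2 := by
  have hD := sq_pureStateTraceDistance 𝕜 hψ hφ
  have hD0 := pureStateTraceDistance_nonneg 𝕜 ψ φ
  rw [inner_helstromVector_right hψ hφ, inner_helstromVector_left hψ,
    sq_norm_helstromVector hψ hφ, norm_mul, RCLike.norm_conj, RCLike.norm_ofReal,
    RCLike.norm_ofReal, abs_of_nonneg hD0, abs_of_nonneg (by positivity)]
  field_simp
  linear_combination (-pureStateTraceDistance 𝕜 ψ φ ^ 2) * hD

theorem exists_norm_eq_one_sq_norm_inner_sub_eq (hψ : ‖ψ‖ = 1) (hφ : ‖φ‖ = 1) :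
    ∃ m : E, ‖m‖ = 1 ∧ ‖⟪m, φ⟫_𝕜‖ ^ 2 - ‖⟪m, ψ⟫_𝕜‖ ^ 2 = pureStateTraceDistance 𝕜 ψ φ := by
  have hD := sq_pureStateTraceDistance 𝕜 hψ hφ
  have hD0 := pureStateTraceDistance_nonneg 𝕜 ψ φ
  rcases eq_or_ne (pureStateTraceDistance 𝕜 ψ φ) 0 with h0 | h0
  · refine ⟨ψ, hψ, ?_⟩
    rw [h0] at hD ⊢
    rw [inner_self_eq_norm_sq_to_K, hψ]
    norm_num
    linarith
  · have hx : ‖helstromVector 𝕜 ψ φ‖ ≠ 0 := by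
      rw [← pow_ne_zero_iff two_ne_zero, sq_norm_helstromVector hψ hφ]
      positivity
    refine ⟨_, norm_smul_inv_norm (𝕜 := 𝕜) (norm_ne_zero_iff.mp hx), ?_⟩
    simp only [inner_smul_left, norm_mul, RCLike.norm_conj, norm_inv, RCLike.norm_ofReal,
      abs_norm, mul_pow, ← mul_sub]
    rw [sq_norm_inner_helstromVector_sub hψ hφ]
    field_simp

theorem exists_orthonormalBasis_apply_eq [FiniteDimensional 𝕜 E] {ι : Type*} [Fintype ι]
    (card_ι : finrank 𝕜 E = Fintype.card ι) {m : E} (hm : ‖m‖ = 1) :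
    ∃ (b : OrthonormalBasis ι 𝕜 E) (i : ι), b i = m := by
  have : Nontrivial E := ⟨⟨m, 0, by rintro rfl; simp at hm⟩⟩
  obtain ⟨i⟩ : Nonempty ι := Fintype.card_pos_iff.mp (card_ι ▸ finrank_pos)
  have hv : Orthonormal 𝕜 (({i} : Set ι).domRestrict fun _ ↦ m) :=
    orthonormal_subsingleton_iff.mpr fun _ ↦ hm
  obtain ⟨b, hb⟩ := hv.exists_orthonormalBasis_extension_of_card_eq card_ι
  exact ⟨b, i, hb i rfl⟩

end

theorem helstrom_measurement_general (d : ℕ)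
    (ψ φ : EuclideanSpace ℂ (Fin d)) (hψ : ‖ψ‖ = 1) (hφ : ‖φ‖ = 1) :
    ∃ M : Fin d → EuclideanSpace ℂ (Fin d), Orthonormal ℂ M ∧
      ∃ S : Finset (Fin d),
        (∑ i ∈ S, ‖(inner ℂ (M i) ψ : ℂ)‖ ^ 2) + (∑ i ∈ Sᶜ, ‖(inner ℂ (M i) φ : ℂ)‖ ^ 2) =
          1 - Real.sqrt (1 - ‖(inner ℂ ψ φ : ℂ)‖ ^ 2) := by
  obtain ⟨m, hm, hgap⟩ := exists_norm_eq_one_sq_norm_inner_sub_eq (𝕜 := ℂ) hψ hφ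
  obtain ⟨B, i, rfl⟩ := exists_orthonormalBasis_apply_eq (𝕜 := ℂ) (ι := Fin d) (by simp) hm
  refine ⟨B, B.orthonormal, {i}, ?_⟩
  have hparseval := B.sum_sq_norm_inner_right φ
  rw [← Finset.sum_compl_add_sum {i}, Finset.sum_singleton, hφ, one_pow] at hparseval
  rw [Finset.sum_singleton]
  rw [pureStateTraceDistance] at hgap
  linarith

/-- Existence of the optimal (Helstrom) projective measurement for discriminating two pure
states `ψ, φ` prepared with equal probabilities: there is an orthonormal basis and a grouping
of its outcomes such that the total error probability equals `1 − √(1 − |⟨ψ, φ⟩|²)`. -/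
theorem helstrom_measurement (d : ℕ) (hd : 2 ≤ d)
    (ψ φ : EuclideanSpace ℂ (Fin d)) (hψ : ‖ψ‖ = 1) (hφ : ‖φ‖ = 1) :
    ∃ M : Fin d → EuclideanSpace ℂ (Fin d), Orthonormal ℂ M ∧
      ∃ S : Finset (Fin d),
        (∑ i ∈ S, ‖(inner ℂ (M i) ψ : ℂ)‖ ^ 2) + (∑ i ∈ Sᶜ, ‖(inner ℂ (M i) φ : ℂ)‖ ^ 2) =
          1 - Real.sqrt (1 - ‖(inner ℂ ψ φ : ℂ)‖ ^ 2) :=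
  helstrom_measurement_general d ψ φ hψ hφ
end
end
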